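/- arXiv:1105.1074 — 4 statements merged into one kernel-verified Lean document; each statement's English description precedes it below -/
import Mathlib

section
/- Let W be a real symmetric m×m matrix satisfying 1ᵀW = 1ᵀ, W1 = 1 and ρ(W − 11ᵀ/m) < 1, let λ₂ := ρ(W − 11ᵀ/m) and let λ_min denote the smallest eigenvalue of W. Let z₀ ∈ ℝᵐ be deterministic, let n be a positive integer, let S₀, S₁, S₂, … be positive reals, and let ε₀, ε₁, ε₂, … be random vectors in ℝᵐ whose components ε_s(i) (over all s and i) are jointly independent real random variables with mean zero and variance at most (S_s/2ⁿ)²/12. Define ẑ_t := Wᵗz₀ + Σ_{s=0}^{t−1} Wˢ(W−I)ε_{t−s−1} + ε_t and z_{t+1} := W^{t+1}z₀ + Σ_{s=0}^{t} Wˢ(W−I)ε_{t−s}. Then for every t ≥ 1, E[‖z_{t+1} − ẑ_t‖²] ≤ ‖z₀‖²·λ₂^{2t}·(1−λ_min)² + (1−λ_min)²·Σ_{s=0}^{t−1} ‖Wˢ(W−I)‖²·m·S_{t−s−1}²/(2^{2n}·12) + (2−λ_min)²·m·S_t²/(2^{2n}·12), where matrix norms are spectral (operator 2-)norms and vector norms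 are Euclidean. -/
/-!
Telescoping the two sums gives
`z_{t+1} - ẑ_t = (W - I)Wᵗz₀ + (W - 2I)ε_t + Σ_{s<t} (W - I)Wˢ(W - I)ε_{t-s-1}`.
The noise components are independent and centred, so the expected squared norm is
`‖(W - I)Wᵗz₀‖²` plus, for each component, its variance times the squared norm of the column
of the gain matrix multiplying it; the squared column norms of `M` add up to at most `m‖M‖²`.
The spectral norms are bounded through the functional calculus of the symmetric matrix `W`:
its spectrum lies in `[λ_min, 1]`, and every eigenvalue other than `1` has an eigenvector
summing to zero, hence is an eigenvalue of `W - 11ᵀ/m` and has modulus at most `λ₂`.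
-/

open Matrix Finset MeasureTheory ProbabilityTheory

/-- The m×m averaging matrix `11ᵀ/m`. -/
noncomputable def avgMat (m : ℕ) : Matrix (Fin m) (Fin m) ℝ := Matrix.of fun _ _ => (1 : ℝ) / m

/-- The spectral (operator 2-)norm of a real square matrix. -/
noncomputable def spNorm {m : ℕ} (M : Matrix (Fin m) (Fin m) ℝ) : ℝ :=
  ‖Matrix.toEuclideanCLM (𝕜 := ℝ) M‖

/-- The Euclidean norm of a vector in `ℝᵐ`. -/
noncomputable def eucNorm {m : ℕ} (v : Fin m → ℝ) : ℝ := Real.sqrt (∑ i, v i ^ 2)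

section

variable {m : ℕ}

lemma eucNorm_sq (v : Fin m → ℝ) : eucNorm v ^ 2 = ∑ i, v i ^ 2 :=
  Real.sq_sqrt (by positivity)

lemma eucNorm_eq_norm (v : Fin m → ℝ) :
    eucNorm v = ‖(EuclideanSpace.equiv (Fin m) ℝ).symm v‖ := by
  simp [eucNorm, EuclideanSpace.norm_eq]

section L2OpNorm

open scoped Matrix.Norms.L2Operator

lemma spNorm_eq_l2_opNorm (M : Matrix (Fin m) (Fin m) ℝ) : spNorm M = ‖M‖ := rfl

lemma spNorm_mul_le (A B : Matrix (Fin m) (Fin m) ℝ) : spNorm (A * B) ≤ spNorm A * spNorm B :=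
  l2_opNorm_mul A B

lemma eucNorm_mulVec_le (M : Matrix (Fin m) (Fin m) ℝ) (v : Fin m → ℝ) :
    eucNorm (M *ᵥ v) ≤ spNorm M * eucNorm v := by
  simpa [eucNorm_eq_norm, spNorm_eq_l2_opNorm] using
    M.l2_opNorm_mulVec ((EuclideanSpace.equiv (Fin m) ℝ).symm v)

variable {W : Matrix (Fin m) (Fin m) ℝ} (hW : IsSelfAdjoint W)
include hW

lemma spNorm_sub_algebraMap_le {a r : ℝ} (har : a ≤ r)
    (hspec : ∀ x ∈ spectrum ℝ W, a ≤ x ∧ x ≤ r) :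
    spNorm (W - algebraMap ℝ _ r) ≤ r - a := by
  have hcfc : cfc (fun x : ℝ => x - r) W = W - algebraMap ℝ _ r := by
    rw [cfc_sub .., cfc_id' .., cfc_const ..]
  rw [spNorm_eq_l2_opNorm, ← hcfc]
  refine norm_cfc_le (sub_nonneg.mpr har) fun x hx => ?_
  rw [Real.norm_eq_abs, abs_le]
  constructor <;> linarith [hspec x hx]

lemma spNorm_sub_one_mul_pow_le {a l : ℝ} (ha : a ≤ 1) (hl : 0 ≤ l)
    (hspec : ∀ x ∈ spectrum ℝ W, a ≤ x ∧ x ≤ 1)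
    (hgap : ∀ x ∈ spectrum ℝ W, x ≠ 1 → |x| ≤ l) (t : ℕ) :
    spNorm ((W - 1) * W ^ t) ≤ (1 - a) * l ^ t := by
  have hcfc : cfc (fun x : ℝ => (x - 1) * x ^ t) W = (W - 1) * W ^ t := by
    rw [cfc_mul .., cfc_sub .., cfc_pow .., cfc_id' .., cfc_const_one ..]
  have hbound : 0 ≤ (1 - a) * l ^ t := mul_nonneg (sub_nonneg.mpr ha) (pow_nonneg hl t)
  rw [spNorm_eq_l2_opNorm, ← hcfc]
  refine norm_cfc_le hbound fun x hx => ?_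
  rcases eq_or_ne x 1 with rfl | hx1
  · simpa using hbound
  · have h1 : |x - 1| ≤ 1 - a := by
      rw [abs_le]
      constructor <;> linarith [hspec x hx]
    rw [Real.norm_eq_abs, abs_mul, abs_pow]
    exact mul_le_mul h1 (pow_le_pow_left₀ (abs_nonneg x) (hgap x hx hx1) t) (by positivity)
      (by linarith)

end L2OpNorm

lemma eucNorm_mulVec_sq_le {M : Matrix (Fin m) (Fin m) ℝ} {b : ℝ} (hM : spNorm M ≤ b)
    (v : Fin m → ℝ) : eucNorm (M *ᵥ v) ^ 2 ≤ b ^ 2 * eucNorm v ^ 2 := by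
  rw [← mul_pow]
  exact pow_le_pow_left₀ (Real.sqrt_nonneg _)
    ((eucNorm_mulVec_le M v).trans (mul_le_mul_of_nonneg_right hM (Real.sqrt_nonneg _))) 2

lemma sum_sq_apply_le_spNorm_sq (M : Matrix (Fin m) (Fin m) ℝ) (j : Fin m) :
    ∑ i, M i j ^ 2 ≤ spNorm M ^ 2 := by
  have h := eucNorm_mulVec_le M (Pi.single j 1)
  have hsingle : eucNorm (Pi.single j 1 : Fin m → ℝ) = 1 := by simp [eucNorm, Pi.single_apply]
  rw [hsingle, mul_one, mulVec_single_one] at h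
  rw [← eucNorm_sq]
  exact pow_le_pow_left₀ (Real.sqrt_nonneg _) h 2

lemma sum_sum_sq_mul_le {M : Matrix (Fin m) (Fin m) ℝ} {b σ : ℝ} (hM : spNorm M ≤ b)
    (hσ : 0 ≤ σ) {v : Fin m → ℝ} (hv : ∀ j, v j ≤ σ) :
    ∑ j, (∑ i, M i j ^ 2) * v j ≤ m * b ^ 2 * σ :=
  calc ∑ j, (∑ i, M i j ^ 2) * v j ≤ ∑ _j : Fin m, b ^ 2 * σ :=
        Finset.sum_le_sum fun j _ =>
          (mul_le_mul_of_nonneg_left (hv j) (by positivity)).trans <|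
            mul_le_mul_of_nonneg_right ((sum_sq_apply_le_spNorm_sq M j).trans <|
              pow_le_pow_left₀ (norm_nonneg _) hM 2) hσ
    _ = m * b ^ 2 * σ := by simp [mul_assoc]

lemma hasEigenvector_of_mem_spectrum {M : Matrix (Fin m) (Fin m) ℝ} {x : ℝ}
    (hx : x ∈ spectrum ℝ M) : ∃ v ≠ 0, M *ᵥ v = x • v := by
  rw [← Matrix.spectrum_toLin', ← Module.End.hasEigenvalue_iff_mem_spectrum] at hx
  obtain ⟨v, hv⟩ := hx.exists_hasEigenvector
  exact ⟨v, hv.2, by simpa using hv.apply_eq_smul⟩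

lemma mem_spectrum_of_hasEigenvector {M : Matrix (Fin m) (Fin m) ℝ} {x : ℝ} {v : Fin m → ℝ}
    (hv : v ≠ 0) (hMv : M *ᵥ v = x • v) : x ∈ spectrum ℝ M := by
  rw [← Matrix.spectrum_toLin', ← Module.End.hasEigenvalue_iff_mem_spectrum]
  exact Module.End.hasEigenvalue_of_hasEigenvector
    ⟨by simpa [Module.End.mem_eigenspace_iff] using hMv, hv⟩

lemma abs_le_toReal_spectralRadius {A : Type*} [Ring A] [Algebra ℝ A] {a : A}
    (ha : spectralRadius ℝ a ≠ ⊤) {x : ℝ} (hx : x ∈ spectrum ℝ a) :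
    |x| ≤ (spectralRadius ℝ a).toReal := by
  have h : (‖x‖₊ : ENNReal) ≤ spectralRadius ℝ a :=
    le_iSup₂ (f := fun k (_ : k ∈ spectrum ℝ a) => (‖k‖₊ : ENNReal)) x hx
  simpa using ENNReal.toReal_mono ha h

lemma avgMat_mulVec (v : Fin m → ℝ) :
    avgMat m *ᵥ v = fun _ => (m : ℝ)⁻¹ * ∑ j, v j := by
  ext i
  simp [avgMat, mulVec, dotProduct, div_eq_inv_mul, Finset.mul_sum]

section Consensus

variable {W : Matrix (Fin m) (Fin m) ℝ} (hcol : vecMul (fun _ => (1 : ℝ)) W = fun _ => 1)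
include hcol

lemma mem_spectrum_sub_avgMat {x : ℝ} (hx : x ∈ spectrum ℝ W) (hx1 : x ≠ 1) :
    x ∈ spectrum ℝ (W - avgMat m) := by
  obtain ⟨v, hv, hWv⟩ := hasEigenvector_of_mem_spectrum hx
  have hsum : x * ∑ j, v j = ∑ j, v j := by
    have h := dotProduct_mulVec (fun _ => (1 : ℝ)) W v
    rw [hcol, hWv] at h
    simpa [dotProduct, Finset.mul_sum] using h
  have hsum0 : ∑ j, v j = 0 :=
    (mul_eq_zero.mp (show (x - 1) * ∑ j, v j = 0 by linarith)).resolve_left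
      (sub_ne_zero.mpr hx1)
  refine mem_spectrum_of_hasEigenvector hv ?_
  rw [sub_mulVec, hWv, avgMat_mulVec, hsum0, mul_zero]
  exact sub_zero _

variable (hρ : spectralRadius ℝ (W - avgMat m) < 1)
include hρ

lemma abs_le_of_mem_spectrum_of_ne_one {x : ℝ} (hx : x ∈ spectrum ℝ W) (hx1 : x ≠ 1) :
    |x| ≤ (spectralRadius ℝ (W - avgMat m)).toReal :=
  abs_le_toReal_spectralRadius hρ.ne_top (mem_spectrum_sub_avgMat hcol hx hx1)

lemma le_one_of_mem_spectrum {x : ℝ} (hx : x ∈ spectrum ℝ W) : x ≤ 1 := by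
  rcases eq_or_ne x 1 with rfl | hx1
  · rfl
  · have hρ1 : (spectralRadius ℝ (W - avgMat m)).toReal ≤ 1 := by
      simpa using ENNReal.toReal_mono ENNReal.one_ne_top hρ.le
    exact (le_abs_self x).trans ((abs_le_of_mem_spectrum_of_ne_one hcol hρ hx hx1).trans hρ1)

end Consensus

/-- The matrix multiplying `ε_{t-k}` in `z_{t+1} - ẑ_t`. -/
noncomputable def noiseGain (W : Matrix (Fin m) (Fin m) ℝ) : ℕ → Matrix (Fin m) (Fin m) ℝ
  | 0 => W - 2
  | k + 1 => (W - 1) * (W ^ k * (W - 1))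

lemma succ_sub_hat_eq (W : Matrix (Fin m) (Fin m) ℝ) (z₀ : Fin m → ℝ)
    (e : ℕ → Fin m → ℝ) (t : ℕ) :
    (W ^ (t + 1)) *ᵥ z₀ + ∑ s ∈ range (t + 1), (W ^ s * (W - 1)) *ᵥ e (t - s) -
      ((W ^ t) *ᵥ z₀ + ∑ s ∈ range t, (W ^ s * (W - 1)) *ᵥ e (t - s - 1) + e t) =
    ((W - 1) * W ^ t) *ᵥ z₀ + ∑ k ∈ range (t + 1), noiseGain W k *ᵥ e (t - k) := by
  have hpow : W ^ (t + 1) *ᵥ z₀ = W ^ t *ᵥ z₀ + ((W - 1) * W ^ t) *ᵥ z₀ := by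
    rw [← add_mulVec, pow_succ']
    noncomm_ring
  have hgain : ∀ s x, (W ^ (s + 1) * (W - 1)) *ᵥ x =
      (W ^ s * (W - 1)) *ᵥ x + noiseGain W (s + 1) *ᵥ x := by
    intro s x
    rw [← add_mulVec, noiseGain, pow_succ']
    noncomm_ring
  have hlast : ∀ x, (W - 1) *ᵥ x = x + noiseGain W 0 *ᵥ x := by
    intro x
    have h : W - 1 = 1 + (W - 2) := by rw [← one_add_one_eq_two]; abel
    rw [noiseGain, h, add_mulVec, one_mulVec]
  rw [Finset.sum_range_succ', Finset.sum_range_succ' _ t, pow_zero, one_mul, hlast, hpow]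
  simp only [hgain, Finset.sum_add_distrib, Nat.sub_zero, Nat.sub_sub]
  abel

section NoiseGain

variable {W : Matrix (Fin m) (Fin m) ℝ} (hW : IsSelfAdjoint W) {a : ℝ} (ha : a ≤ 1)
  (hspec : ∀ x ∈ spectrum ℝ W, a ≤ x ∧ x ≤ 1)
include hW ha hspec

lemma spNorm_noiseGain_zero_le : spNorm (noiseGain W 0) ≤ 2 - a := by
  have h := spNorm_sub_algebraMap_le hW (r := 2) (by linarith)
    fun x hx => ⟨(hspec x hx).1, by linarith [(hspec x hx).2]⟩
  rwa [map_ofNat] at h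

lemma spNorm_noiseGain_succ_le (k : ℕ) :
    spNorm (noiseGain W (k + 1)) ≤ (1 - a) * spNorm (W ^ k * (W - 1)) :=
  (spNorm_mul_le _ _).trans <| mul_le_mul_of_nonneg_right
    (by simpa using spNorm_sub_algebraMap_le hW ha hspec) (norm_nonneg _)

end NoiseGain

end

section Noise

variable {Ω ι : Type*} [MeasurableSpace Ω] {μ : Measure Ω}

lemma memLp_const_add_sum_mul [IsFiniteMeasure μ] {X : ι → Ω → ℝ} {F : Finset ι}
    (hX : ∀ p ∈ F, MemLp (X p) 2 μ) (c : ℝ) (a : ι → ℝ) :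
    MemLp (fun ω => c + ∑ p ∈ F, a p * X p ω) 2 μ :=
  (memLp_const c).add (memLp_finsetSum F fun p hp => (hX p hp).const_mul (a p))

lemma pairwise_indepFun_tsub {m : ℕ} {ε : ℕ → Fin m → Ω → ℝ}
    (h : iIndepFun (fun p : ℕ × Fin m => ε p.1 p.2) μ) (t : ℕ) :
    ((range (t + 1) ×ˢ univ : Finset (ℕ × Fin m)) : Set (ℕ × Fin m)).Pairwise
      fun p q => IndepFun (ε (t - p.1) p.2) (ε (t - q.1) q.2) μ := by
  intro p hp q hq hpq
  simp only [coe_product, coe_range, coe_univ, Set.mem_prod, Set.mem_Iio] at hp hq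
  exact h.indepFun (i := (t - p.1, p.2)) (j := (t - q.1, q.2)) fun h => hpq <| by
    simp only [Prod.ext_iff] at h ⊢
    omega

variable [IsProbabilityMeasure μ]

lemma integral_const_add_sum_sq {X : ι → Ω → ℝ} {F : Finset ι}
    (hX : ∀ p ∈ F, MemLp (X p) 2 μ) (hmean : ∀ p ∈ F, ∫ ω, X p ω ∂μ = 0)
    (hind : (F : Set ι).Pairwise fun p q => IndepFun (X p) (X q) μ) (c : ℝ) (a : ι → ℝ) :
    ∫ ω, (c + ∑ p ∈ F, a p * X p ω) ^ 2 ∂μ = c ^ 2 + ∑ p ∈ F, a p ^ 2 * variance (X p) μ := by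
  have hY : MemLp (fun ω => ∑ p ∈ F, a p * X p ω) 2 μ := by
    simpa using memLp_const_add_sum_mul hX 0 a
  have hYmean : ∫ ω, ∑ p ∈ F, a p * X p ω ∂μ = 0 := by
    rw [integral_finsetSum F fun p hp => ((hX p hp).integrable one_le_two).const_mul _]
    exact Finset.sum_eq_zero fun p hp => by rw [integral_const_mul, hmean p hp, mul_zero]
  have hYvar : variance (fun ω => ∑ p ∈ F, a p * X p ω) μ =
      ∑ p ∈ F, a p ^ 2 * variance (X p) μ := by
    rw [← Finset.sum_fn, IndepFun.variance_sum (fun p hp => (hX p hp).const_mul (a p))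
      fun p hp q hq hpq =>
        (hind hp hq hpq).comp (measurable_const_mul _) (measurable_const_mul _)]
    exact Finset.sum_congr rfl fun p _ => variance_const_mul _ _ _
  have hZmean : ∫ ω, c + ∑ p ∈ F, a p * X p ω ∂μ = c := by
    rw [integral_add (integrable_const c) (hY.integrable one_le_two), hYmean]
    simp
  have hvarZ := variance_eq_sub (memLp_const_add_sum_mul hX c a)
  rw [variance_const_add hY.aestronglyMeasurable, hYvar, hZmean] at hvarZ
  simp only [Pi.pow_apply] at hvarZ
  linarith

lemma integral_eucNorm_sq_add_sum_mulVec {m : ℕ} {Y : ι → Fin m → Ω → ℝ} {F : Finset ι}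
    (hY : ∀ k ∈ F, ∀ j, MemLp (Y k j) 2 μ) (hmean : ∀ k ∈ F, ∀ j, ∫ ω, Y k j ω ∂μ = 0)
    (hind : ((F ×ˢ univ : Finset (ι × Fin m)) : Set (ι × Fin m)).Pairwise
      fun p q => IndepFun (Y p.1 p.2) (Y q.1 q.2) μ)
    (c : Fin m → ℝ) (M : ι → Matrix (Fin m) (Fin m) ℝ) :
    ∫ ω, eucNorm (c + ∑ k ∈ F, M k *ᵥ fun j => Y k j ω) ^ 2 ∂μ =
      eucNorm c ^ 2 + ∑ k ∈ F, ∑ j, (∑ i, M k i j ^ 2) * variance (Y k j) μ := by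
  have hY' : ∀ p ∈ F ×ˢ univ, MemLp (Y p.1 p.2) 2 μ := fun p hp =>
    hY p.1 (Finset.mem_product.mp hp).1 p.2
  have hmean' : ∀ p ∈ F ×ˢ univ, ∫ ω, Y p.1 p.2 ω ∂μ = 0 := fun p hp =>
    hmean p.1 (Finset.mem_product.mp hp).1 p.2
  have hcoord : ∀ ω, eucNorm (c + ∑ k ∈ F, M k *ᵥ fun j => Y k j ω) ^ 2 =
      ∑ i, (c i + ∑ p ∈ F ×ˢ univ, M p.1 i p.2 * Y p.1 p.2 ω) ^ 2 := fun ω => by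
    rw [eucNorm_sq]
    refine Finset.sum_congr rfl fun i _ => ?_
    rw [Pi.add_apply, Finset.sum_apply, Finset.sum_product]
    rfl
  rw [integral_congr_ae (Filter.Eventually.of_forall hcoord),
    integral_finsetSum _ fun i _ => (memLp_const_add_sum_mul hY' _ _).integrable_sq,
    Finset.sum_congr rfl fun i _ =>
      integral_const_add_sum_sq hY' hmean' hind (c i) fun p => M p.1 i p.2,
    Finset.sum_add_distrib, ← eucNorm_sq, Finset.sum_comm, Finset.sum_product]
  simp_rw [Finset.sum_mul]

end Noise

theorem prop1_expected_successive_difference_bound_general {m : ℕ}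
    (W : Matrix (Fin m) (Fin m) ℝ) (hsym : W.IsSymm)
    (hcol : Matrix.vecMul (fun _ => (1 : ℝ)) W = fun _ => 1)
    (hρ : spectralRadius ℝ (W - avgMat m) < 1)
    (lam2 : ℝ) (hlam2 : lam2 = (spectralRadius ℝ (W - avgMat m)).toReal)
    (lammin : ℝ) (hmem : lammin ∈ spectrum ℝ W)
    (hmin : ∀ μ' ∈ spectrum ℝ W, lammin ≤ μ')
    (z₀ : Fin m → ℝ) (n : ℕ) (S : ℕ → ℝ)
    {Ω : Type} [MeasurableSpace Ω] (μ : Measure Ω) [IsProbabilityMeasure μ]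
    (ε : ℕ → Fin m → Ω → ℝ)
    (hL2 : ∀ s i, MemLp (ε s i) 2 μ)
    (hindep : iIndepFun
      (fun p : ℕ × Fin m => ε p.1 p.2) μ)
    (hmean : ∀ s i, ∫ ω, ε s i ω ∂μ = 0)
    (hvar : ∀ s i, variance (ε s i) μ ≤ (S s / 2 ^ n) ^ 2 / 12)
    (zhat z : ℕ → Ω → Fin m → ℝ)
    (hzhat : ∀ t ω, zhat t ω = (W ^ t).mulVec z₀ +
        (∑ s ∈ Finset.range t, (W ^ s * (W - 1)).mulVec (fun i => ε (t - s - 1) i ω)) +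
        fun i => ε t i ω)
    (hz : ∀ t ω, z (t + 1) ω = (W ^ (t + 1)).mulVec z₀ +
        ∑ s ∈ Finset.range (t + 1), (W ^ s * (W - 1)).mulVec (fun i => ε (t - s) i ω))
    (t : ℕ) :
    ∫ ω, eucNorm (z (t + 1) ω - zhat t ω) ^ 2 ∂μ ≤
      eucNorm z₀ ^ 2 * lam2 ^ (2 * t) * (1 - lammin) ^ 2 +
      (1 - lammin) ^ 2 *
        ∑ s ∈ Finset.range t,
          spNorm (W ^ s * (W - 1)) ^ 2 * m * S (t - s - 1) ^ 2 / (2 ^ (2 * n) * 12) +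
      (2 - lammin) ^ 2 * m * S t ^ 2 / (2 ^ (2 * n) * 12) := by
  have hW : IsSelfAdjoint W := isHermitian_iff_isSelfAdjoint.mp hsym
  have hspec : ∀ x ∈ spectrum ℝ W, lammin ≤ x ∧ x ≤ 1 := fun x hx =>
    ⟨hmin x hx, le_one_of_mem_spectrum hcol hρ hx⟩
  have hmin1 : lammin ≤ 1 := (hspec _ hmem).2
  have hgap : ∀ x ∈ spectrum ℝ W, x ≠ 1 → |x| ≤ lam2 := fun x hx hx1 =>
    hlam2 ▸ abs_le_of_mem_spectrum_of_ne_one hcol hρ hx hx1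
  have hσ : ∀ s j, variance (ε s j) μ ≤ S s ^ 2 / (2 ^ (2 * n) * 12) := fun s j => by
    simpa only [div_pow, div_div, ← pow_mul, mul_comm n 2] using hvar s j
  have hdiff : ∀ ω, z (t + 1) ω - zhat t ω = ((W - 1) * W ^ t) *ᵥ z₀ +
      ∑ k ∈ range (t + 1), noiseGain W k *ᵥ fun j => ε (t - k) j ω := fun ω => by
    rw [hz, hzhat]
    exact succ_sub_hat_eq W z₀ (fun s j => ε s j ω) t
  rw [integral_congr_ae (.of_forall fun ω => by rw [hdiff ω]),
    integral_eucNorm_sq_add_sum_mulVec (fun _ _ j => hL2 _ j) (fun _ _ j => hmean _ j)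
      (pairwise_indepFun_tsub hindep t), sum_range_succ', mul_sum]
  simp only [Nat.sub_sub, Nat.sub_zero]
  have hinit : eucNorm (((W - 1) * W ^ t) *ᵥ z₀) ^ 2 ≤
      eucNorm z₀ ^ 2 * lam2 ^ (2 * t) * (1 - lammin) ^ 2 :=
    (eucNorm_mulVec_sq_le (spNorm_sub_one_mul_pow_le hW hmin1 (hlam2 ▸ ENNReal.toReal_nonneg)
      hspec hgap t) z₀).trans_eq (by ring)
  have hpast : ∀ k ∈ range t,
      ∑ j, (∑ i, noiseGain W (k + 1) i j ^ 2) * variance (ε (t - (k + 1)) j) μ ≤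
        (1 - lammin) ^ 2 * (spNorm (W ^ k * (W - 1)) ^ 2 * m * S (t - (k + 1)) ^ 2 /
          (2 ^ (2 * n) * 12)) := fun k _ =>
    (sum_sum_sq_mul_le (spNorm_noiseGain_succ_le hW hmin1 hspec k) (by positivity)
      (hσ _)).trans_eq (by ring)
  have hnow : ∑ j, (∑ i, noiseGain W 0 i j ^ 2) * variance (ε t j) μ ≤
      (2 - lammin) ^ 2 * m * S t ^ 2 / (2 ^ (2 * n) * 12) :=
    (sum_sum_sq_mul_le (spNorm_noiseGain_zero_le hW hmin1 hspec) (by positivity)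
      (hσ t)).trans_eq (by ring)
  linarith [sum_le_sum hpast]

/-- **Proposition 1.** Let `W` be a real symmetric `m×m` matrix with `1ᵀW = 1ᵀ`,
`W1 = 1` and `ρ(W − 11ᵀ/m) < 1`, let `λ₂ := ρ(W − 11ᵀ/m)` and `λ_min` its smallest eigenvalue.
Let the quantization noise components `ε_s(i)` be jointly independent, zero mean, with variance
at most `(S_s/2ⁿ)²/12`.  With
`ẑ_t = Wᵗz₀ + Σ_{s=0}^{t−1} Wˢ(W−I)ε_{t−s−1} + ε_t` and
`z_{t+1} = W^{t+1}z₀ + Σ_{s=0}^{t} Wˢ(W−I)ε_{t−s}`, for every `t ≥ 1`: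
`E[‖z_{t+1} − ẑ_t‖²] ≤ ‖z₀‖²λ₂^{2t}(1−λ_min)²
  + (1−λ_min)²·Σ_{s=0}^{t−1}‖Wˢ(W−I)‖²·m·S_{t−s−1}²/(2^{2n}·12)
  + (2−λ_min)²·m·S_t²/(2^{2n}·12)`. -/
theorem prop1_expected_successive_difference_bound {m : ℕ}
    (W : Matrix (Fin m) (Fin m) ℝ) (hsym : W.IsSymm)
    (hcol : Matrix.vecMul (fun _ => (1 : ℝ)) W = fun _ => 1)
    (hrow : W.mulVec (fun _ => (1 : ℝ)) = fun _ => 1)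
    (hρ : spectralRadius ℝ (W - avgMat m) < 1)
    (lam2 : ℝ) (hlam2 : lam2 = (spectralRadius ℝ (W - avgMat m)).toReal)
    (lammin : ℝ) (hmem : lammin ∈ spectrum ℝ W)
    (hmin : ∀ μ' ∈ spectrum ℝ W, lammin ≤ μ')
    (z₀ : Fin m → ℝ) (n : ℕ) (hn : 0 < n) (S : ℕ → ℝ) (hS : ∀ s, 0 < S s)
    {Ω : Type} [MeasurableSpace Ω] (μ : Measure Ω) [IsProbabilityMeasure μ]
    (ε : ℕ → Fin m → Ω → ℝ)
    (hL2 : ∀ s i, MemLp (ε s i) 2 μ)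
    (hindep : iIndepFun
      (fun p : ℕ × Fin m => ε p.1 p.2) μ)
    (hmean : ∀ s i, ∫ ω, ε s i ω ∂μ = 0)
    (hvar : ∀ s i, variance (ε s i) μ ≤ (S s / 2 ^ n) ^ 2 / 12)
    (zhat z : ℕ → Ω → Fin m → ℝ)
    (hzhat : ∀ t ω, zhat t ω = (W ^ t).mulVec z₀ +
        (∑ s ∈ Finset.range t, (W ^ s * (W - 1)).mulVec (fun i => ε (t - s - 1) i ω)) +
        fun i => ε t i ω)
    (hz : ∀ t ω, z (t + 1) ω = (W ^ (t + 1)).mulVec z₀ +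
        ∑ s ∈ Finset.range (t + 1), (W ^ s * (W - 1)).mulVec (fun i => ε (t - s) i ω))
    (t : ℕ) (ht : 1 ≤ t) :
    ∫ ω, eucNorm (z (t + 1) ω - zhat t ω) ^ 2 ∂μ ≤
      eucNorm z₀ ^ 2 * lam2 ^ (2 * t) * (1 - lammin) ^ 2 +
      (1 - lammin) ^ 2 *
        ∑ s ∈ Finset.range t,
          spNorm (W ^ s * (W - 1)) ^ 2 * m * S (t - s - 1) ^ 2 / (2 ^ (2 * n) * 12) +
      (2 - lammin) ^ 2 * m * S t ^ 2 / (2 ^ (2 * n) * 12) :=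
  prop1_expected_successive_difference_bound_general W hsym hcol hρ lam2 hlam2 lammin hmem hmin z₀ n
    S μ ε hL2 hindep hmean hvar zhat z hzhat hz t
end

section
/- Let W be a real symmetric m×m matrix satisfying 1ᵀW = 1ᵀ, W1 = 1 and ρ(W − 11ᵀ/m) < 1. Let ε₀, ε₁, ε₂, … be a sequence of (deterministic) vectors in ℝᵐ and define z_{t+1} := W^{t+1}z₀ + Σ_{s=0}^{t} Wˢ(W−I)ε_{t−s} for a given z₀ ∈ ℝᵐ. Let σ_t² := (1/m)·‖ε_t − (11ᵀ/m)ε_t‖² be the sample variance of ε_t. If σ_t² → 0 as t → ∞, then ‖z_{t+1} − (11ᵀ/m)z₀‖ → 0 as t → ∞; that is, every node state converges to the average μ = (1/m)·1ᵀz₀ of the initial values. -/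
open Matrix Finset Filter

/-! With `P = 11ᵀ/m`, the hypotheses on `W` say that the idempotent `P` is absorbed by `W` on both
sides, so `W^(t+1) = (W - P)^(t+1) + P` and `Wˢ(W - I) = (W - P)ˢ(W - I)(I - P)`. Hence
`z_{t+1} - Pz₀ = B^(t+1) z₀ + Σ_{s ≤ t} Bˢ y_{t-s}` with `B = W - P` and
`y_u = (W - I)(ε_u - Pε_u)`. As `B` is symmetric, its operator norm on `ℓ²` equals its spectral
radius, which is `< 1`. So the first term decays geometrically, and the second is the convolution
of the summable sequence `‖Bˢ‖` with `‖y_u‖ → 0` (this is `σ_u → 0`), which tends to zero by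
dominated convergence. -/

open Topology

theorem tendsto_sum_range_mul_sub_of_summable {c a : ℕ → ℝ} (hc : Summable c)
    (ha : Tendsto a atTop (𝓝 0)) :
    Tendsto (fun t ↦ ∑ s ∈ range (t + 1), c s * a (t - s)) atTop (𝓝 0) := by
  obtain ⟨M, hM⟩ := ha.norm.bddAbove_range
  let f : ℕ → ℕ → ℝ := fun t s ↦ if s ≤ t then c s * a (t - s) else 0
  have hf : ∀ t, ∑' s, f t s = ∑ s ∈ range (t + 1), c s * a (t - s) := fun t ↦ by
    rw [tsum_eq_sum (s := range (t + 1)) fun s hs ↦ if_neg (by simpa [Nat.lt_succ_iff] using hs)]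
    exact sum_congr rfl fun s hs ↦ if_pos (Nat.lt_succ_iff.mp (mem_range.mp hs))
  have hlim : ∀ s, Tendsto (f · s) atTop (𝓝 0) := fun s ↦ by
    have : Tendsto (fun t ↦ c s * a (t - s)) atTop (𝓝 0) := by
      simpa using (ha.comp (tendsto_sub_atTop_nat s)).const_mul (c s)
    exact this.congr' ((eventually_ge_atTop s).mono fun t ht ↦ (if_pos ht).symm)
  have hbound : ∀ t s, ‖f t s‖ ≤ ‖c s‖ * M := fun t s ↦ by
    by_cases hst : s ≤ t
    · simp only [f, if_pos hst, norm_mul]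
      exact mul_le_mul_of_nonneg_left (hM (Set.mem_range_self _)) (norm_nonneg _)
    · simp only [f, if_neg hst, norm_zero]
      exact mul_nonneg (norm_nonneg _) ((norm_nonneg _).trans (hM (Set.mem_range_self 0)))
  simpa [hf] using tendsto_tsum_of_dominated_convergence (hc.norm.mul_right M) hlim
    (Eventually.of_forall hbound)

theorem ContinuousLinearMap.tendsto_pow_apply {𝕜 E : Type*} [NontriviallyNormedField 𝕜]
    [NormedAddCommGroup E] [NormedSpace 𝕜 E] {T : E →L[𝕜] E} (hT : ‖T‖ < 1) (x : E) :
    Tendsto (fun n ↦ (T ^ n) x) atTop (𝓝 0) := by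
  have := ((ContinuousLinearMap.apply 𝕜 E x).continuous.tendsto 0).comp
    (tendsto_pow_atTop_nhds_zero_of_norm_lt_one hT)
  rwa [map_zero] at this

theorem ContinuousLinearMap.tendsto_sum_range_pow_apply_sub {𝕜 E : Type*}
    [NontriviallyNormedField 𝕜] [NormedAddCommGroup E] [NormedSpace 𝕜 E] {T : E →L[𝕜] E}
    (hT : ‖T‖ < 1) {y : ℕ → E}
    (hy : Tendsto y atTop (𝓝 0)) :
    Tendsto (fun t ↦ ∑ s ∈ range (t + 1), (T ^ s) (y (t - s))) atTop (𝓝 0) := by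
  have hsum : Summable fun s ↦ ‖T ^ s‖ :=
    .of_norm_bounded_eventually_nat (summable_geometric_of_lt_one (norm_nonneg T) hT)
      ((eventually_norm_pow_le T).mono fun s hs ↦ (norm_norm (T ^ s)).trans_le hs)
  have hbound : ∀ t, ‖∑ s ∈ range (t + 1), (T ^ s) (y (t - s))‖
      ≤ ∑ s ∈ range (t + 1), ‖T ^ s‖ * ‖y (t - s)‖ :=
    fun t ↦ (norm_sum_le _ _).trans (sum_le_sum fun s _ ↦ (T ^ s).le_opNorm (y (t - s)))
  exact squeeze_zero_norm hbound
    (tendsto_sum_range_mul_sub_of_summable hsum (tendsto_zero_iff_norm_tendsto_zero.mp hy))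

theorem Matrix.IsHermitian.spectralRadius_eq_nnnorm_toEuclideanCLM {𝕜 n : Type*} [RCLike 𝕜]
    [Fintype n] [DecidableEq n] {A : Matrix n n 𝕜} (hA : A.IsHermitian) :
    spectralRadius 𝕜 A = ‖toEuclideanCLM (𝕜 := 𝕜) A‖₊ := by
  rw [← ContinuousLinearMap.spectralRadius_eq_nnnorm _ (hA.isSelfAdjoint.map toEuclideanCLM),
    spectralRadius, spectralRadius, AlgEquiv.spectrum_eq]

section IdempotentAbsorbing

variable {R : Type*} [Ring R] {w p : R}

theorem pow_succ_eq_sub_pow_succ_add (hwp : w * p = p) (hpw : p * w = p) (hpp : p * p = p)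
    (n : ℕ) : w ^ (n + 1) = (w - p) ^ (n + 1) + p := by
  have hright : (w - p) * p = 0 := by rw [sub_mul, hwp, hpp, sub_self]
  have hleft : p * (w - p) = 0 := by rw [mul_sub, hpw, hpp, sub_self]
  induction n with
  | zero => simp
  | succ n ih =>
    have hpow : (w - p) ^ (n + 1) * p = 0 := by rw [pow_succ, mul_assoc, hright, mul_zero]
    calc w ^ (n + 1 + 1) = ((w - p) ^ (n + 1) + p) * ((w - p) + p) := by
          rw [pow_succ, ih, sub_add_cancel]
      _ = (w - p) ^ (n + 1 + 1) + p := by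
          rw [mul_add, add_mul, add_mul, hpow, hleft, hpp, ← pow_succ, add_zero, zero_add]

theorem pow_mul_sub_one_eq (hwp : w * p = p) (hpw : p * w = p) (hpp : p * p = p) (n : ℕ) :
    w ^ n * (w - 1) = (w - p) ^ n * (w - 1) * (1 - p) := by
  have hsub : (w - 1) * (1 - p) = w - 1 := by
    rw [mul_sub, mul_one, sub_mul, one_mul, hwp, sub_self, sub_zero]
  have hpsub : p * (w - 1) = 0 := by rw [mul_sub, hpw, mul_one, sub_self]
  rw [mul_assoc, hsub]
  cases n with
  | zero => simp
  | succ n => rw [pow_succ_eq_sub_pow_succ_add hwp hpw hpp, add_mul, hpsub, add_zero]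

end IdempotentAbsorbing

theorem avgMat_mul_avgMat (m : ℕ) : avgMat m * avgMat m = avgMat m := by
  ext i j
  have : (m : ℝ) ≠ 0 := Nat.cast_ne_zero.mpr (Fin.pos i).ne'
  simp [avgMat, mul_apply]
  field_simp

theorem mul_avgMat_of_mulVec_one {m : ℕ} {W : Matrix (Fin m) (Fin m) ℝ}
    (hW : W *ᵥ (fun _ ↦ 1) = fun _ ↦ 1) : W * avgMat m = avgMat m := by
  ext i j
  have hrow : ∑ k, W i k = 1 := by simpa [mulVec, dotProduct] using congrFun hW i
  simp [avgMat, mul_apply, ← sum_mul, hrow]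

theorem avgMat_mul_of_vecMul_one {m : ℕ} {W : Matrix (Fin m) (Fin m) ℝ}
    (hW : (fun _ ↦ 1) ᵥ* W = fun _ ↦ 1) : avgMat m * W = avgMat m := by
  ext i j
  have hcol : ∑ k, W k j = 1 := by simpa [vecMul, dotProduct] using congrFun hW j
  simp [avgMat, mul_apply, ← mul_sum, hcol]

theorem Matrix.IsSymm.isHermitian_sub_avgMat {m : ℕ} {W : Matrix (Fin m) (Fin m) ℝ}
    (hW : W.IsSymm) : (W - avgMat m).IsHermitian := by
  rw [isHermitian_iff_isSymm]
  exact hW.sub (IsSymm.ext fun _ _ ↦ rfl)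

theorem eucNorm_eq_norm_toLp {m : ℕ} (v : Fin m → ℝ) : eucNorm v = ‖WithLp.toLp 2 v‖ := by
  simp [eucNorm, EuclideanSpace.norm_eq]

theorem tendsto_eucNorm_of_tendsto_inv_mul_sq {m : ℕ} {v : ℕ → Fin m → ℝ}
    (h : Tendsto (fun t ↦ 1 / (m : ℝ) * eucNorm (v t) ^ 2) atTop (𝓝 0)) :
    Tendsto (fun t ↦ eucNorm (v t)) atTop (𝓝 0) := by
  rcases Nat.eq_zero_or_pos m with rfl | hm
  · simp [eucNorm]
  have hm' : (m : ℝ) ≠ 0 := by positivity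
  have hsqrt := (h.const_mul (m : ℝ)).sqrt
  simp only [mul_zero, Real.sqrt_zero, ← mul_assoc, one_div, mul_inv_cancel₀ hm', one_mul] at hsqrt
  simpa [Real.sqrt_sq (Real.sqrt_nonneg _), eucNorm] using hsqrt

/-- **Proposition 2.** Let `W` be a real symmetric `m×m` matrix with `1ᵀW = 1ᵀ`,
`W1 = 1` and `ρ(W − 11ᵀ/m) < 1`.  For noise vectors `ε_t` define
`z_{t+1} = W^{t+1}z₀ + Σ_{s=0}^{t} Wˢ(W−I)ε_{t−s}` and let
`σ_t² = (1/m)·‖ε_t − (11ᵀ/m)ε_t‖²` be the sample variance of `ε_t`.  If `σ_t² → 0`, then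
`‖z_{t+1} − (11ᵀ/m)z₀‖ → 0`: the nodes converge to the average of the initial values. -/
theorem prop2_convergence_of_vanishing_noise_variance {m : ℕ}
    (W : Matrix (Fin m) (Fin m) ℝ) (hsym : W.IsSymm)
    (hcol : Matrix.vecMul (fun _ => (1 : ℝ)) W = fun _ => 1)
    (hrow : W.mulVec (fun _ => (1 : ℝ)) = fun _ => 1)
    (hρ : spectralRadius ℝ (W - avgMat m) < 1)
    (z₀ : Fin m → ℝ) (ε : ℕ → Fin m → ℝ) (z : ℕ → Fin m → ℝ)
    (hz : ∀ t, z (t + 1) = (W ^ (t + 1)).mulVec z₀ +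
        ∑ s ∈ Finset.range (t + 1), (W ^ s * (W - 1)).mulVec (ε (t - s)))
    (hσ : Tendsto (fun t => (1 / (m : ℝ)) * eucNorm (ε t - (avgMat m).mulVec (ε t)) ^ 2)
        atTop (nhds 0)) :
    Tendsto (fun t => eucNorm (z (t + 1) - (avgMat m).mulVec z₀)) atTop (nhds 0) := by
  set P := avgMat m
  have hWP : W * P = P := mul_avgMat_of_mulVec_one hrow
  have hPW : P * W = P := avgMat_mul_of_vecMul_one hcol
  have hPP : P * P = P := avgMat_mul_avgMat m
  set T := toEuclideanCLM (𝕜 := ℝ) (W - P)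
  have hT : ‖T‖ < 1 := by
    rw [hsym.isHermitian_sub_avgMat.spectralRadius_eq_nnnorm_toEuclideanCLM] at hρ
    exact_mod_cast hρ
  set y : ℕ → EuclideanSpace ℝ (Fin m) := fun t ↦ toEuclideanCLM (𝕜 := ℝ) (W - 1)
    (WithLp.toLp 2 (ε t - P *ᵥ ε t))
  have hnoise : Tendsto (fun t ↦ WithLp.toLp 2 (ε t - P *ᵥ ε t)) atTop (𝓝 0) := by
    simpa [tendsto_zero_iff_norm_tendsto_zero, eucNorm_eq_norm_toLp] using
      tendsto_eucNorm_of_tendsto_inv_mul_sq hσ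
  have hy : Tendsto y atTop (𝓝 0) :=
    ((toEuclideanCLM (𝕜 := ℝ) (W - 1)).continuous.tendsto' 0 0 (map_zero _)).comp hnoise
  have hdecomp : ∀ t, WithLp.toLp 2 (z (t + 1) - P *ᵥ z₀)
      = (T ^ (t + 1)) (WithLp.toLp 2 z₀) + ∑ s ∈ range (t + 1), (T ^ s) (y (t - s)) := by
    intro t
    have hmat : z (t + 1) - P *ᵥ z₀ = (W - P) ^ (t + 1) *ᵥ z₀
        + ∑ s ∈ range (t + 1), (W - P) ^ s *ᵥ ((W - 1) *ᵥ (ε (t - s) - P *ᵥ ε (t - s))) := by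
      simp only [hz, pow_succ_eq_sub_pow_succ_add hWP hPW hPP, pow_mul_sub_one_eq hWP hPW hPP,
        add_mulVec, ← mulVec_mulVec, sub_mulVec, one_mulVec]
      abel
    rw [hmat, WithLp.toLp_add, WithLp.toLp_sum]
    simp only [T, y, ← map_pow, toEuclideanCLM_toLp]
  simp_rw [eucNorm_eq_norm_toLp, hdecomp, ← tendsto_zero_iff_norm_tendsto_zero]
  simpa using ((T.tendsto_pow_apply hT _).comp (tendsto_add_atTop_nat 1)).add
    (T.tendsto_sum_range_pow_apply_sub hT hy)
end

section
/- Let W be a real symmetric m×m matrix satisfying 1ᵀW = 1ᵀ, W1 = 1 and ρ(W − 11ᵀ/m) < 1, let λ₂ := ρ(W − 11ᵀ/m) and λ_min its smallest eigenvalue, let n be a positive integer and z∞ := ‖z₀‖_∞ for some z₀ ∈ ℝᵐ. Let (x_t) satisfy x₁ = z∞²(1−λ_min)² + (2−λ_min)²·x₀/(3·2^{2n}) and, for t ≥ 1, x_{t+1} = z∞²·λ₂^{2t}·(1−λ_min)² + (1−λ_min)²·Σ_{s=0}^{t−1} ‖Wˢ(W−I)‖²·x_{t−s−1}/(3·2^{2n})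 + (2−λ_min)²·x_t/(3·2^{2n}), with x₀ > 0. Let P be the sequence with P(0) = x₀, P(1) = x₁, and P(t) = z∞²(1−λ_min)²·λ₂^{2(t−1)} + (1−λ_min)⁴·Σ_{s=0}^{t−2} λ₂^{2s}·P(t−2−s)/(3·2^{2n}) + (2−λ_min)²·P(t−1)/(3·2^{2n}) for t ≥ 2. Then x_t ≤ P(t) for all t ≥ 0. -/
open Matrix Finset

/-- The supremum norm of a vector in `ℝᵐ`. -/
noncomputable def supNorm {m : ℕ} (v : Fin m → ℝ) : ℝ := ⨆ i, |v i|

open scoped ENNReal Matrix.Norms.L2Operator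

/-!
Since `1ᵀW = 1ᵀ`, an eigenvector of the symmetric matrix `W` for an eigenvalue `μ ≠ 1` has
coordinate sum zero, so `11ᵀ/m` kills it and `μ` is also an eigenvalue of `W - 11ᵀ/m`; hence
`|μ| ≤ λ₂ < 1`. Diagonalizing `W` orthogonally, `‖Wˢ(W - I)‖ = maxᵢ |μᵢ|ˢ |μᵢ - 1|`, which is at
most `λ₂ˢ |1 - λ_min|`. Thus every coefficient of the recursion for `x` is dominated by the
corresponding coefficient of `P`, and since `x ≥ 0`, strong induction gives `x_t ≤ P(t)`.
-/

theorem Matrix.mem_spectrum_of_mulVec_eq_smul {R n : Type*} [CommRing R] [Fintype n]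
    [DecidableEq n] {A : Matrix n n R} {v : n → R} {μ : R} (hv : v ≠ 0) (h : A *ᵥ v = μ • v) :
    μ ∈ spectrum R A :=
  Matrix.spectrum_toLin' A ▸ Module.End.HasEigenvalue.mem_spectrum
    (Module.End.hasEigenvalue_of_hasEigenvector
      ⟨Module.End.mem_eigenspace_iff.mpr (by simpa [Matrix.toLin'_apply] using h), hv⟩)

theorem Matrix.sum_eq_zero_of_mulVec_eq_smul {K n : Type*} [Field K] [Fintype n]
    {A : Matrix n n K} (hA : vecMul (fun _ => 1) A = fun _ => 1) {v : n → K} {μ : K}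
    (h : A *ᵥ v = μ • v) (hμ : μ ≠ 1) : ∑ i, v i = 0 := by
  have hsum : μ * ∑ i, v i = ∑ i, v i := by
    simpa [dotProduct, mul_sum, h, hA] using dotProduct_mulVec (fun _ => (1 : K)) A v
  by_contra hne
  exact hμ ((mul_eq_right₀ hne).mp hsum)

theorem avgMat_mulVec_of_sum_eq_zero {m : ℕ} {v : Fin m → ℝ} (h : ∑ i, v i = 0) :
    avgMat m *ᵥ v = 0 := by
  ext i
  simp [avgMat, mulVec, dotProduct, ← mul_sum, h]

theorem norm_le_toReal_spectralRadius {𝕜 A : Type*} [NormedField 𝕜] [Ring A] [Algebra 𝕜 A]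
    {a : A} {μ : 𝕜} (hμ : μ ∈ spectrum 𝕜 a) (h : spectralRadius 𝕜 a ≠ ∞) :
    ‖μ‖ ≤ (spectralRadius 𝕜 a).toReal :=
  ENNReal.toReal_mono h (le_iSup₂ (f := fun k _ => (‖k‖₊ : ℝ≥0∞)) μ hμ)

theorem Matrix.IsHermitian.l2_opNorm_cfc_le {𝕜 n : Type*} [RCLike 𝕜] [Fintype n] [DecidableEq n]
    {A : Matrix n n 𝕜} (hA : A.IsHermitian) (f : ℝ → ℝ) {C : ℝ} (hC : 0 ≤ C)
    (hf : ∀ i, |f (hA.eigenvalues i)| ≤ C) : ‖cfc f A‖ ≤ C := by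
  rw [hA.cfc_eq, IsHermitian.cfc, Unitary.conjStarAlgAut_apply, ← Unitary.coe_star,
    CStarRing.norm_mul_coe_unitary, CStarRing.norm_coe_unitary_mul, l2_opNorm_diagonal]
  exact (pi_norm_le_iff_of_nonneg hC).mpr fun i => by simpa using hf i

theorem Matrix.IsHermitian.abs_eigenvalues_le_spectralRadius_sub_avgMat {m : ℕ}
    {W : Matrix (Fin m) (Fin m) ℝ} (hW : W.IsHermitian) (hcol : vecMul (fun _ => 1) W = fun _ => 1)
    (hρ : spectralRadius ℝ (W - avgMat m) ≠ ∞) {i : Fin m} (hi : hW.eigenvalues i ≠ 1) :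
    |hW.eigenvalues i| ≤ (spectralRadius ℝ (W - avgMat m)).toReal := by
  have hv := hW.mulVec_eigenvectorBasis i
  have hsum := sum_eq_zero_of_mulVec_eq_smul hcol hv hi
  have hv' : (W - avgMat m) *ᵥ hW.eigenvectorBasis i =
      hW.eigenvalues i • hW.eigenvectorBasis i := by
    rw [sub_mulVec, avgMat_mulVec_of_sum_eq_zero hsum, sub_zero, hv]
  have hne : ⇑(hW.eigenvectorBasis i) ≠ 0 := by
    simpa using hW.eigenvectorBasis.orthonormal.ne_zero i
  exact norm_le_toReal_spectralRadius (mem_spectrum_of_mulVec_eq_smul hne hv') hρ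

theorem spNorm_pow_mul_sub_one_le {m : ℕ} {W : Matrix (Fin m) (Fin m) ℝ} (hsym : W.IsSymm)
    (hcol : vecMul (fun _ => 1) W = fun _ => 1) (hρ : spectralRadius ℝ (W - avgMat m) < 1)
    {c : ℝ} (hc : ∀ μ ∈ spectrum ℝ W, c ≤ μ) (s : ℕ) :
    spNorm (W ^ s * (W - 1)) ≤ (spectralRadius ℝ (W - avgMat m)).toReal ^ s * |1 - c| := by
  have hW : W.IsHermitian := isHermitian_iff_isSymm.mpr hsym
  set l := (spectralRadius ℝ (W - avgMat m)).toReal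
  have hl : l < 1 := ENNReal.toReal_lt_of_lt_ofReal (by simpa using hρ)
  have hpoly : W ^ s * (W - 1) = cfc (fun x : ℝ => x ^ s * (x - 1)) W := by
    rw [cfc_mul .., cfc_pow .., cfc_sub .., cfc_id' .., cfc_const_one ..]
  rw [spNorm, hpoly]
  refine hW.l2_opNorm_cfc_le _ (by positivity) fun i => ?_
  by_cases hi : hW.eigenvalues i = 1
  · simp only [hi, sub_self, mul_zero, abs_zero]
    positivity
  have hμl := hW.abs_eigenvalues_le_spectralRadius_sub_avgMat hcol hρ.ne_top hi
  have hcμ := hc _ (hW.eigenvalues_mem_spectrum_real i)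
  have hμ1 : |hW.eigenvalues i - 1| ≤ |1 - c| := by
    rw [abs_sub_comm, abs_of_nonneg (by linarith [le_abs_self (hW.eigenvalues i)])]
    exact (sub_le_sub_left hcμ 1).trans (le_abs_self _)
  rw [abs_mul, abs_pow]
  gcongr

section ConvolutionRecursion

variable {x P a k K : ℕ → ℝ} {β : ℝ}

theorem nonneg_of_convolution_recursion (hβ : 0 ≤ β) (ha : ∀ t, 0 ≤ a t) (hk : ∀ s, 0 ≤ k s)
    (hx0 : 0 ≤ x 0) (hx1 : 0 ≤ x 1)
    (hx : ∀ t, 1 ≤ t → x (t + 1) = a t + ∑ s ∈ range t, k s * x (t - s - 1) + β * x t) :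
    ∀ t, 0 ≤ x t := by
  intro t
  induction t using Nat.strong_induction_on with
  | _ t ih =>
    match t with
    | 0 => exact hx0
    | 1 => exact hx1
    | t + 2 =>
      rw [hx (t + 1) (by omega)]
      have hsum : 0 ≤ ∑ s ∈ range (t + 1), k s * x (t + 1 - s - 1) :=
        sum_nonneg fun s _ => mul_nonneg (hk s) (ih _ (by omega))
      have hxt := ih (t + 1) (by omega)
      have hat := ha (t + 1)
      positivity

theorem le_of_convolution_recursion (hβ : 0 ≤ β) (ha : ∀ t, 0 ≤ a t) (hk : ∀ s, 0 ≤ k s)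
    (hkK : ∀ s, k s ≤ K s) (hx0 : 0 ≤ x 0) (hx1 : 0 ≤ x 1)
    (hx : ∀ t, 1 ≤ t → x (t + 1) = a t + ∑ s ∈ range t, k s * x (t - s - 1) + β * x t)
    (hP0 : P 0 = x 0) (hP1 : P 1 = x 1)
    (hP : ∀ t, 1 ≤ t → P (t + 1) = a t + ∑ s ∈ range t, K s * P (t - s - 1) + β * P t) :
    ∀ t, x t ≤ P t := by
  have hx_nonneg := nonneg_of_convolution_recursion hβ ha hk hx0 hx1 hx
  intro t
  induction t using Nat.strong_induction_on with
  | _ t ih =>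
    match t with
    | 0 => exact hP0.ge
    | 1 => exact hP1.ge
    | t + 2 =>
      rw [hx (t + 1) (by omega), hP (t + 1) (by omega)]
      have hsum : ∑ s ∈ range (t + 1), k s * x (t + 1 - s - 1) ≤
          ∑ s ∈ range (t + 1), K s * P (t + 1 - s - 1) := by
        refine sum_le_sum fun s _ => ?_
        have hxP := ih (t + 1 - s - 1) (by omega)
        calc k s * x (t + 1 - s - 1) ≤ k s * P (t + 1 - s - 1) := by gcongr; exact hk s
          _ ≤ K s * P (t + 1 - s - 1) := by
            gcongr
            · exact (hx_nonneg _).trans hxP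
            · exact hkK s
      gcongr
      exact ih (t + 1) (by omega)

end ConvolutionRecursion

theorem majorizing_sequence_bounds_recursion_general {m : ℕ}
    (W : Matrix (Fin m) (Fin m) ℝ) (hsym : W.IsSymm)
    (hcol : Matrix.vecMul (fun _ => (1 : ℝ)) W = fun _ => 1)
    (hρ : spectralRadius ℝ (W - avgMat m) < 1)
    (lam2 : ℝ) (hlam2 : lam2 = (spectralRadius ℝ (W - avgMat m)).toReal)
    (lammin : ℝ)
    (hmin : ∀ μ ∈ spectrum ℝ W, lammin ≤ μ)
    (n : ℕ) (zinf : ℝ)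
    (x : ℕ → ℝ) (hx0 : 0 < x 0)
    (hx1 : x 1 = zinf ^ 2 * (1 - lammin) ^ 2 + (2 - lammin) ^ 2 * x 0 / (3 * 2 ^ (2 * n)))
    (hxrec : ∀ t, 1 ≤ t →
      x (t + 1) = zinf ^ 2 * lam2 ^ (2 * t) * (1 - lammin) ^ 2 +
        (1 - lammin) ^ 2 *
          ∑ s ∈ Finset.range t, spNorm (W ^ s * (W - 1)) ^ 2 * x (t - s - 1) / (3 * 2 ^ (2 * n)) +
        (2 - lammin) ^ 2 * x t / (3 * 2 ^ (2 * n)))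
    (P : ℕ → ℝ) (hP0 : P 0 = x 0) (hP1 : P 1 = x 1)
    (hPrec : ∀ t, 2 ≤ t →
      P t = zinf ^ 2 * (1 - lammin) ^ 2 * lam2 ^ (2 * (t - 1)) +
        (1 - lammin) ^ 4 *
          ∑ s ∈ Finset.range (t - 1), lam2 ^ (2 * s) * P (t - 2 - s) / (3 * 2 ^ (2 * n)) +
        (2 - lammin) ^ 2 * P (t - 1) / (3 * 2 ^ (2 * n))) :
    ∀ t, x t ≤ P t := by
  set D : ℝ := 3 * 2 ^ (2 * n)
  have hnorm_sq (s : ℕ) : spNorm (W ^ s * (W - 1)) ^ 2 ≤ lam2 ^ (2 * s) * (1 - lammin) ^ 2 := by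
    rw [pow_mul', ← sq_abs (1 - lammin), ← mul_pow, hlam2]
    exact pow_le_pow_left₀ (norm_nonneg _) (spNorm_pow_mul_sub_one_le hsym hcol hρ hmin s) 2
  refine le_of_convolution_recursion
    (a := fun t => zinf ^ 2 * lam2 ^ (2 * t) * (1 - lammin) ^ 2)
    (k := fun s => (1 - lammin) ^ 2 * spNorm (W ^ s * (W - 1)) ^ 2 / D)
    (K := fun s => (1 - lammin) ^ 4 * lam2 ^ (2 * s) / D) (β := (2 - lammin) ^ 2 / D)
    (by positivity) (fun t => by rw [pow_mul]; positivity) (fun s => by positivity)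
    (fun s => ?dominated) hx0.le (by rw [hx1]; positivity) (fun t ht => ?rec_x) hP0 hP1
    (fun t ht => ?rec_P)
  case dominated =>
    grw [hnorm_sq s]
    exact le_of_eq (by ring)
  case rec_x =>
    rw [hxrec t ht, mul_sum]
    congr 1
    · congr 1
      exact sum_congr rfl fun s _ => by ring
    · ring
  case rec_P =>
    rw [hPrec (t + 1) (by omega), Nat.add_sub_cancel, mul_sum]
    congr 1
    · congr 1
      · ring
      · exact sum_congr rfl fun s _ => by rw [show t + 1 - 2 - s = t - s - 1 by omega]; ring
    · ring

/-- The sequence `P` of Definition 1 majorizes the sequence `(x_t)` defined by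
the recursion of Proposition 3: `x_t ≤ P(t)` for all `t ≥ 0`. -/
theorem majorizing_sequence_bounds_recursion {m : ℕ}
    (W : Matrix (Fin m) (Fin m) ℝ) (hsym : W.IsSymm)
    (hcol : Matrix.vecMul (fun _ => (1 : ℝ)) W = fun _ => 1)
    (hrow : W.mulVec (fun _ => (1 : ℝ)) = fun _ => 1)
    (hρ : spectralRadius ℝ (W - avgMat m) < 1)
    (lam2 : ℝ) (hlam2 : lam2 = (spectralRadius ℝ (W - avgMat m)).toReal)
    (lammin : ℝ) (hmem : lammin ∈ spectrum ℝ W)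
    (hmin : ∀ μ ∈ spectrum ℝ W, lammin ≤ μ)
    (n : ℕ) (hn : 0 < n) (z₀ : Fin m → ℝ) (zinf : ℝ) (hzinf : zinf = supNorm z₀)
    (x : ℕ → ℝ) (hx0 : 0 < x 0)
    (hx1 : x 1 = zinf ^ 2 * (1 - lammin) ^ 2 + (2 - lammin) ^ 2 * x 0 / (3 * 2 ^ (2 * n)))
    (hxrec : ∀ t, 1 ≤ t →
      x (t + 1) = zinf ^ 2 * lam2 ^ (2 * t) * (1 - lammin) ^ 2 +
        (1 - lammin) ^ 2 *
          ∑ s ∈ Finset.range t, spNorm (W ^ s * (W - 1)) ^ 2 * x (t - s - 1) / (3 * 2 ^ (2 * n)) +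
        (2 - lammin) ^ 2 * x t / (3 * 2 ^ (2 * n)))
    (P : ℕ → ℝ) (hP0 : P 0 = x 0) (hP1 : P 1 = x 1)
    (hPrec : ∀ t, 2 ≤ t →
      P t = zinf ^ 2 * (1 - lammin) ^ 2 * lam2 ^ (2 * (t - 1)) +
        (1 - lammin) ^ 4 *
          ∑ s ∈ Finset.range (t - 1), lam2 ^ (2 * s) * P (t - 2 - s) / (3 * 2 ^ (2 * n)) +
        (2 - lammin) ^ 2 * P (t - 1) / (3 * 2 ^ (2 * n))) :
    ∀ t, x t ≤ P t :=
  majorizing_sequence_bounds_recursion_general W hsym hcol hρ lam2 hlam2 lammin hmin n zinf x hx0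
    hx1 hxrec P hP0 hP1 hPrec
end

section
/- Let b > 0, c > 0 and γ ∈ (0, 1). Then (c + γ + √((c−γ)² + 4b))/2 < 1 if and only if b/(1−γ) + c < 1. In particular, with c = (2−λ_min)²/(3·2^{2n}), b = (1−λ_min)⁴/(3·2^{2n}) and γ = λ₂² for λ₂ ∈ (0,1), the largest eigenvalue of the companion matrix A = [[c+γ, b−cγ],[1, 0]] is strictly less than 1 in absolute value if and only if (1−λ_min)⁴/(1−λ₂²) + (2−λ_min)² < 3·2^{2n}. -/
/-!
Squaring `√((c - γ)² + 4b) < 2 - (c + γ)` and using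
`(2 - (c + γ))² - (c - γ)² = 4 (1 - c) (1 - γ)` turns the eigenvalue bound into
`b < (1 - c)(1 - γ)`, which for `γ < 1` is `b / (1 - γ) + c < 1`. The specialisation only
rescales `b` and `c` by the common factor `3 · 2^{2n}`.
-/

theorem larger_root_lt_one_iff {b c γ : ℝ} (hb : 0 ≤ b) (hγ : γ < 1) :
    (c + γ + √((c - γ) ^ 2 + 4 * b)) / 2 < 1 ↔ b < (1 - c) * (1 - γ) := by
  have hdiff : (2 - (c + γ)) ^ 2 - (c - γ) ^ 2 = 4 * ((1 - c) * (1 - γ)) := by ring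
  constructor
  · intro h
    have hs : √((c - γ) ^ 2 + 4 * b) < 2 - (c + γ) := by linarith
    have := (Real.sqrt_lt' ((Real.sqrt_nonneg _).trans_lt hs)).mp hs
    linarith
  · intro h
    have hc : 0 < 1 - c := pos_of_mul_pos_left (hb.trans_lt h) (sub_pos.2 hγ).le
    have := (Real.sqrt_lt' (by linarith : 0 < 2 - (c + γ))).mpr
      (by linarith : (c - γ) ^ 2 + 4 * b < (2 - (c + γ)) ^ 2)
    linarith

theorem larger_root_lt_one_iff_div_add_lt_one {b c γ : ℝ} (hb : 0 ≤ b) (hγ : γ < 1) :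
    (c + γ + √((c - γ) ^ 2 + 4 * b)) / 2 < 1 ↔ b / (1 - γ) + c < 1 := by
  rw [larger_root_lt_one_iff hb hγ, ← lt_sub_iff_add_lt, div_lt_iff₀ (sub_pos.2 hγ)]

/-- For `b > 0`, `c > 0` and `γ ∈ (0,1)`,
`(c + γ + √((c−γ)² + 4b))/2 < 1 ↔ b/(1−γ) + c < 1`.  In particular, with
`c = (2−λ_min)²/(3·2^{2n})`, `b = (1−λ_min)⁴/(3·2^{2n})` and `γ = λ₂²` for `λ₂ ∈ (0,1)`, the
largest eigenvalue `(c+γ+√((c−γ)²+4b))/2` of the companion matrix `A = [[c+γ, b−cγ],[1,0]]` is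
strictly less than `1` in absolute value iff `(1−λ_min)⁴/(1−λ₂²) + (2−λ_min)² < 3·2^{2n}`. -/
theorem companion_eigenvalue_lt_one_iff :
    (∀ b c γ : ℝ, 0 < b → 0 < c → γ ∈ Set.Ioo (0 : ℝ) 1 →
      ((c + γ + Real.sqrt ((c - γ) ^ 2 + 4 * b)) / 2 < 1 ↔ b / (1 - γ) + c < 1)) ∧
    (∀ (lammin lam2 : ℝ) (n : ℕ), 0 < n → lam2 ∈ Set.Ioo (0 : ℝ) 1 →
      (|((2 - lammin) ^ 2 / (3 * 2 ^ (2 * n)) + lam2 ^ 2 +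
          Real.sqrt (((2 - lammin) ^ 2 / (3 * 2 ^ (2 * n)) - lam2 ^ 2) ^ 2 +
            4 * ((1 - lammin) ^ 4 / (3 * 2 ^ (2 * n))))) / 2| < 1 ↔
        (1 - lammin) ^ 4 / (1 - lam2 ^ 2) + (2 - lammin) ^ 2 < 3 * 2 ^ (2 * n))) := by
  refine ⟨fun b c γ hb _ hγ => larger_root_lt_one_iff_div_add_lt_one hb.le hγ.2, ?_⟩
  intro lammin lam2 n _ hlam2
  have hD : (0 : ℝ) < 3 * 2 ^ (2 * n) := by positivity
  have hγ : lam2 ^ 2 < 1 := pow_lt_one₀ hlam2.1.le hlam2.2 two_ne_zero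
  have hrescale : (1 - lammin) ^ 4 / (3 * 2 ^ (2 * n)) / (1 - lam2 ^ 2) +
      (2 - lammin) ^ 2 / (3 * 2 ^ (2 * n)) =
      ((1 - lammin) ^ 4 / (1 - lam2 ^ 2) + (2 - lammin) ^ 2) / (3 * 2 ^ (2 * n)) := by ring
  rw [abs_of_nonneg (by positivity),
    larger_root_lt_one_iff_div_add_lt_one (by positivity) hγ, hrescale, div_lt_one hD]
end
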